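/- Let φ, α, κ, β_i, γ̃_ij, A_ij, Γ_i be smooth fields on ℝ × ℝ³ satisfying the linearized BSSN evolution equations (E1), (E2), (E4), (E5) and (E6). Then the field A_ij satisfies the wave equation ∂_t∂_t A_ij = Δ A_ij at every point of ℝ × ℝ³ and for all i, j. -/

import Mathlib

/-!
Differentiating (E5) in time and substituting (E1), (E2), (E4) and (E6) expresses ∂_t∂_t A_ij
through spatial derivatives of A, β and κ: the term −2A_ij of (E4) produces ΔA_ij, and every
κ- and β-term cancels once the partial derivatives are commuted. Only linearity and commutation
of ∂_t, ∂_1, ∂_2, ∂_3 enter, so the identity holds for any commuting linear operators; on smooth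
functions these are the directional derivatives along (1, 0) and (0, e_i).
-/

noncomputable section

/-- Spacetime ℝ × ℝ³. -/
abbrev Spc : Type := ℝ × (Fin 3 → ℝ)

/-- Time derivative ∂_t. -/
noncomputable def pt (f : Spc → ℝ) : Spc → ℝ :=
  fun p => deriv (fun s => f (s, p.2)) p.1

/-- Spatial partial derivative ∂_i. -/
noncomputable def ps (i : Fin 3) (f : Spc → ℝ) : Spc → ℝ :=
  fun p => deriv (fun s => f (p.1, Function.update p.2 i s)) (p.2 i)

/-- Spatial Laplacian Δ = Σ_i ∂_i ∂_i. -/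
noncomputable def lap (f : Spc → ℝ) : Spc → ℝ :=
  fun p => ∑ i : Fin 3, ps i (ps i f) p

/-- Kronecker delta δ_ij. -/
noncomputable def kron (i j : Fin 3) : ℝ := if i = j then 1 else 0

open scoped ContDiff

section SmoothFunctions

variable (E F : Type*) [NormedAddCommGroup E] [NormedSpace ℝ E]
  [NormedAddCommGroup F] [NormedSpace ℝ F]

def smoothFunctions : Submodule ℝ (E → F) where
  carrier := {f | ContDiff ℝ ∞ f}
  add_mem' {_ _} (hf : ContDiff ℝ ∞ _) (hg : ContDiff ℝ ∞ _) := hf.add hg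
  zero_mem' := (contDiff_const : ContDiff ℝ ∞ fun _ : E => (0 : F))
  smul_mem' c _ (hf : ContDiff ℝ ∞ _) := hf.const_smul c

variable {E F}

lemma smoothFunctions.contDiff (f : smoothFunctions E F) : ContDiff ℝ ∞ (f : E → F) := f.2

lemma smoothFunctions.differentiable (f : smoothFunctions E F) : Differentiable ℝ (f : E → F) :=
  (smoothFunctions.contDiff f).differentiable (by simp)

lemma ContDiff.fderiv_apply_right {f : E → F} (hf : ContDiff ℝ ∞ f) (v : E) :
    ContDiff ℝ ∞ (fun p => fderiv ℝ f p v) :=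
  (hf.fderiv_right (m := ∞) (by simp)).clm_apply contDiff_const

lemma fderiv_fderiv_apply_comm {f : E → F} (hf : ContDiff ℝ ∞ f) (v w : E) (p : E) :
    fderiv ℝ (fun q => fderiv ℝ f q w) p v = fderiv ℝ (fun q => fderiv ℝ f q v) p w := by
  have hf' : Differentiable ℝ (fderiv ℝ f) :=
    (hf.fderiv_right (m := ∞) (by simp)).differentiable (by simp)
  rw [fderiv_clm_apply (hf' p) (differentiableAt_const w),
    fderiv_clm_apply (hf' p) (differentiableAt_const v)]
  simpa using (hf.contDiffAt.isSymmSndFDerivAt (by simp; norm_cast)) v w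

def dirDeriv (v : E) : smoothFunctions E F →ₗ[ℝ] smoothFunctions E F where
  toFun f :=
    ⟨fun p => fderiv ℝ (f : E → F) p v, (smoothFunctions.contDiff f).fderiv_apply_right v⟩
  map_add' f g := by
    ext p
    simp [fderiv_add (smoothFunctions.differentiable f p) (smoothFunctions.differentiable g p)]
  map_smul' c f := by
    ext p
    simp [fderiv_const_smul (smoothFunctions.differentiable f p)]

@[simp] lemma coe_dirDeriv (v : E) (f : smoothFunctions E F) :
    (dirDeriv v f : E → F) = fun p => fderiv ℝ f p v := rfl

lemma dirDeriv_comm (v w : E) (f : smoothFunctions E F) :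
    dirDeriv v (dirDeriv w f) = dirDeriv w (dirDeriv v f) := by
  ext p
  exact fderiv_fderiv_apply_comm (smoothFunctions.contDiff f) v w p

end SmoothFunctions

section LinearizedBSSN

variable {M : Type*} [AddCommGroup M] [Module ℝ M]

def spatialLaplacian (Ds : Fin 3 → M →ₗ[ℝ] M) : M →ₗ[ℝ] M := ∑ l, Ds l ∘ₗ Ds l

lemma spatialLaplacian_apply (Ds : Fin 3 → M →ₗ[ℝ] M) (x : M) :
    spatialLaplacian Ds x = ∑ l, Ds l (Ds l x) := by
  simp [spatialLaplacian]

lemma map_spatialLaplacian_comm {D : M →ₗ[ℝ] M} {Ds : Fin 3 → M →ₗ[ℝ] M}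
    (hD : ∀ l x, D (Ds l x) = Ds l (D x)) (x : M) :
    D (spatialLaplacian Ds x) = spatialLaplacian Ds (D x) := by
  simp only [spatialLaplacian_apply, map_sum, hD]

theorem wave_equation_of_linearizedBSSN (Dt : M →ₗ[ℝ] M) (Ds : Fin 3 → M →ₗ[ℝ] M)
    (hts : ∀ i x, Dt (Ds i x) = Ds i (Dt x)) (hss : ∀ i j x, Ds i (Ds j x) = Ds j (Ds i x))
    (φ α κ : M) (β Γ : Fin 3 → M) (γ A : Fin 3 → Fin 3 → M)
    (E1 : Dt φ = -(1/6 : ℝ) • κ + (1/6 : ℝ) • ∑ l, Ds l (β l))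
    (E2 : Dt α = -κ)
    (E4 : ∀ i j, Dt (γ i j) = -(2 : ℝ) • A i j + Ds i (β j) + Ds j (β i)
      - ((2/3 : ℝ) * kron i j) • ∑ l, Ds l (β l))
    (E5 : ∀ i j, Dt (A i j) = -(1/2 : ℝ) • spatialLaplacian Ds (γ i j)
      + (1/2 : ℝ) • (Ds i (Γ j) + Ds j (Γ i))
      - (2 : ℝ) • Ds i (Ds j φ) - (2 * kron i j) • spatialLaplacian Ds φ
      - Ds i (Ds j α) + ((1/3 : ℝ) * kron i j) • spatialLaplacian Ds α)
    (E6 : ∀ i, Dt (Γ i) = -(4/3 : ℝ) • Ds i κ + (1/3 : ℝ) • Ds i (∑ l, Ds l (β l))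
      + spatialLaplacian Ds (β i))
    (i j : Fin 3) :
    Dt (Dt (A i j)) = spatialLaplacian Ds (A i j) := by
  have hsLap : ∀ m x, Ds m (spatialLaplacian Ds x) = spatialLaplacian Ds (Ds m x) :=
    fun m => map_spatialLaplacian_comm (hss m)
  rw [E5]
  simp only [map_add, map_sub, map_smul, map_spatialLaplacian_comm hts, hts]
  rw [E4, E6 i, E6 j, E1, E2]
  simp only [map_add, map_sub, map_smul, map_neg, hsLap]
  rw [hss j i κ, hss j i (∑ l, Ds l (β l))]
  module

end LinearizedBSSN

section Spacetime

lemma pt_eq_fderiv {f : Spc → ℝ} (hf : Differentiable ℝ f) (p : Spc) :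
    pt f p = fderiv ℝ f p (1, 0) := by
  have hline : HasDerivAt (fun s : ℝ => ((s, p.2) : Spc)) (1, 0) p.1 :=
    (hasDerivAt_id p.1).prodMk (hasDerivAt_const _ _)
  exact ((hf p).hasFDerivAt.comp_hasDerivAt p.1 hline).deriv

lemma ps_eq_fderiv {f : Spc → ℝ} (hf : Differentiable ℝ f) (i : Fin 3) (p : Spc) :
    ps i f p = fderiv ℝ f p (0, Pi.single i 1) := by
  have hline : HasDerivAt (fun s : ℝ => ((p.1, Function.update p.2 i s) : Spc))
      (0, Pi.single i 1) (p.2 i) :=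
    (hasDerivAt_const _ _).prodMk (hasDerivAt_update p.2 i (p.2 i))
  have h := (hf _).hasFDerivAt.comp_hasDerivAt (p.2 i) hline
  simp only [Function.update_eq_self] at h
  exact h.deriv

def timeDeriv : smoothFunctions Spc ℝ →ₗ[ℝ] smoothFunctions Spc ℝ := dirDeriv (1, 0)

def spaceDeriv (i : Fin 3) : smoothFunctions Spc ℝ →ₗ[ℝ] smoothFunctions Spc ℝ :=
  dirDeriv (0, Pi.single i 1)

variable (f : smoothFunctions Spc ℝ)

@[simp] lemma coe_timeDeriv : (timeDeriv f : Spc → ℝ) = pt f := by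
  ext p
  rw [pt_eq_fderiv (smoothFunctions.differentiable f)]
  rfl

@[simp] lemma coe_spaceDeriv (i : Fin 3) : (spaceDeriv i f : Spc → ℝ) = ps i f := by
  ext p
  rw [ps_eq_fderiv (smoothFunctions.differentiable f)]
  rfl

@[simp] lemma coe_spatialLaplacian_spaceDeriv :
    (spatialLaplacian spaceDeriv f : Spc → ℝ) = lap f := by
  ext p
  simp [spatialLaplacian_apply, lap]

end Spacetime

theorem A_wave_equation_general
    (φ α κ : Spc → ℝ) (β Γ : Fin 3 → Spc → ℝ)
    (γ A : Fin 3 → Fin 3 → Spc → ℝ)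
    (hφ : ContDiff ℝ (⊤ : ℕ∞) φ) (hα : ContDiff ℝ (⊤ : ℕ∞) α)
    (hκ : ContDiff ℝ (⊤ : ℕ∞) κ)
    (hβ : ∀ i, ContDiff ℝ (⊤ : ℕ∞) (β i)) (hΓ : ∀ i, ContDiff ℝ (⊤ : ℕ∞) (Γ i))
    (hγ : ∀ i j, ContDiff ℝ (⊤ : ℕ∞) (γ i j)) (hA : ∀ i j, ContDiff ℝ (⊤ : ℕ∞) (A i j))
    (E1 : ∀ p, pt φ p = -(1/6) * κ p + (1/6) * ∑ l, ps l (β l) p)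
    (E2 : ∀ p, pt α p = -κ p)
    (E4 : ∀ i j p, pt (γ i j) p =
      -2 * A i j p + ps i (β j) p + ps j (β i) p
        - (2/3) * kron i j * ∑ l, ps l (β l) p)
    (E5 : ∀ i j p, pt (A i j) p =
      -(1/2) * lap (γ i j) p + (1/2) * (ps i (Γ j) p + ps j (Γ i) p)
        - 2 * ps i (ps j φ) p - 2 * kron i j * lap φ p
        - ps i (ps j α) p + (1/3) * kron i j * lap α p)
    (E6 : ∀ i p, pt (Γ i) p =
      -(4/3) * ps i κ p + (1/3) * ps i (fun q => ∑ l, ps l (β l) q) p + lap (β i) p) :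
    ∀ i j p, pt (pt (A i j)) p = lap (A i j) p := by
  intro i j p
  have key := wave_equation_of_linearizedBSSN timeDeriv spaceDeriv
    (fun _ _ => dirDeriv_comm _ _ _) (fun _ _ _ => dirDeriv_comm _ _ _)
    ⟨φ, hφ⟩ ⟨α, hα⟩ ⟨κ, hκ⟩ (fun l => ⟨β l, hβ l⟩) (fun l => ⟨Γ l, hΓ l⟩)
    (fun i j => ⟨γ i j, hγ i j⟩) (fun i j => ⟨A i j, hA i j⟩)
    (by ext q; simp [E1]) (by ext q; simp [E2])
    (fun i j => by ext q; simp [E4]) (fun i j => by ext q; simp [E5]; ring)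
    (fun i => by ext q; simp [E6, -map_sum, Finset.sum_fn]) i j
  simpa using congrFun (congrArg Subtype.val key) p

/-- If the linearized BSSN evolution equations (E1), (E2), (E4), (E5), (E6) hold for
smooth fields, then `A_ij` satisfies the wave equation `∂_t∂_t A_ij = Δ A_ij`. -/
theorem A_wave_equation
    (φ α κ : Spc → ℝ) (β Γ : Fin 3 → Spc → ℝ)
    (γ A : Fin 3 → Fin 3 → Spc → ℝ)
    (hφ : ContDiff ℝ (⊤ : ℕ∞) φ) (hα : ContDiff ℝ (⊤ : ℕ∞) α)
    (hκ : ContDiff ℝ (⊤ : ℕ∞) κ)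
    (hβ : ∀ i, ContDiff ℝ (⊤ : ℕ∞) (β i)) (hΓ : ∀ i, ContDiff ℝ (⊤ : ℕ∞) (Γ i))
    (hγ : ∀ i j, ContDiff ℝ (⊤ : ℕ∞) (γ i j)) (hA : ∀ i j, ContDiff ℝ (⊤ : ℕ∞) (A i j))
    (hγsym : ∀ i j, γ i j = γ j i) (hAsym : ∀ i j, A i j = A j i)
    (E1 : ∀ p, pt φ p = -(1/6) * κ p + (1/6) * ∑ l, ps l (β l) p)
    (E2 : ∀ p, pt α p = -κ p)
    (E4 : ∀ i j p, pt (γ i j) p =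
      -2 * A i j p + ps i (β j) p + ps j (β i) p
        - (2/3) * kron i j * ∑ l, ps l (β l) p)
    (E5 : ∀ i j p, pt (A i j) p =
      -(1/2) * lap (γ i j) p + (1/2) * (ps i (Γ j) p + ps j (Γ i) p)
        - 2 * ps i (ps j φ) p - 2 * kron i j * lap φ p
        - ps i (ps j α) p + (1/3) * kron i j * lap α p)
    (E6 : ∀ i p, pt (Γ i) p =
      -(4/3) * ps i κ p + (1/3) * ps i (fun q => ∑ l, ps l (β l) q) p + lap (β i) p) :
    ∀ i j p, pt (pt (A i j)) p = lap (A i j) p :=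
  A_wave_equation_general φ α κ β Γ γ A hφ hα hκ hβ hΓ hγ hA E1 E2 E4 E5 E6
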